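/- arXiv:1908.10859 — 2 statements merged into one kernel-verified Lean document; each statement's English description precedes it below -/
import Mathlib

section
/- For every real number κ ≥ 1, with g₁(κ) := 4 + 20/κ² + 56/κ³ + 40/κ⁴ + 8/κ⁵ + 20/κ⁶ + 12/κ⁷ + 1/κ⁸ + 2/κ⁹ + 1/κ¹⁰, the inequality -(κ/4)·((2 - √(g₁(κ))) + 2/κ + (1/κ)·√(g₁(κ))) ≤ -1/5 holds. -/
noncomputable def g1 (κ : ℝ) : ℝ :=
  4 + 20/κ^2 + 56/κ^3 + 40/κ^4 + 8/κ^5 + 20/κ^6 + 12/κ^7 + 1/κ^8 + 2/κ^9 + 1/κ^10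

theorem stmt_1 (κ : ℝ) (hκ : 1 ≤ κ) :
    -(κ/4) * ((2 - Real.sqrt (g1 κ)) + 2/κ + (1/κ) * Real.sqrt (g1 κ)) ≤ -1/5 := by
  have hκ0 : (0:ℝ) < κ := lt_of_lt_of_le one_pos hκ
  have hκne : κ ≠ 0 := ne_of_gt hκ0
  have ht : (0:ℝ) ≤ κ - 1 := by linarith
  set s := Real.sqrt (g1 κ) with hs
  have hs0 : 0 ≤ s := Real.sqrt_nonneg _
  have key : (κ - 1) * s ≤ 2*κ + 6/5 := by
    have h1 : (κ-1) * s = Real.sqrt ((κ-1)^2 * g1 κ) := by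
      rw [Real.sqrt_mul (sq_nonneg _), Real.sqrt_sq ht]
    have h2 : (2*κ + 6/5 : ℝ) = Real.sqrt ((2*κ + 6/5)^2) := by
      rw [Real.sqrt_sq (by linarith)]
    rw [h1, h2]
    apply Real.sqrt_le_sqrt
    have hg1 : g1 κ = (4*κ^10 + 20*κ^8 + 56*κ^7 + 40*κ^6 + 8*κ^5 + 20*κ^4
        + 12*κ^3 + κ^2 + 2*κ + 1) / κ^10 := by
      unfold g1; field_simp
    rw [hg1, ← mul_div_assoc, div_le_iff₀ (by positivity)]
    nlinarith [pow_nonneg ht 2, pow_nonneg ht 3, pow_nonneg ht 4, pow_nonneg ht 5,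
      pow_nonneg ht 6, pow_nonneg ht 7, pow_nonneg ht 8, pow_nonneg ht 9,
      pow_nonneg ht 10, pow_nonneg ht 11, ht]
  have hexp : -(κ/4) * ((2 - s) + 2/κ + (1/κ) * s)
      = -((2*κ + 2) - (κ - 1) * s) / 4 := by
    field_simp; ring
  rw [hexp]
  linarith [key]
end

section
/- For every real number κ ≥ 1, the polynomial inequality (2κ + 6/5)² - (κ-1)²·g₁(κ) ≥ 0 holds, where g₁(κ) := 4 + 20/κ² + 56/κ³ + 40/κ⁴ + 8/κ⁵ + 20/κ⁶ + 12/κ⁷ + 1/κ⁸ + 2/κ⁹ + 1/κ¹⁰. -/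
def g1Num (κ : ℝ) : ℝ :=
  4*κ^10 + 20*κ^8 + 56*κ^7 + 40*κ^6 + 8*κ^5 + 20*κ^4 + 12*κ^3 + κ^2 + 2*κ + 1

lemma g1_mul_pow_ten {κ : ℝ} (hκ : κ ≠ 0) : g1 κ * κ ^ 10 = g1Num κ := by
  unfold g1 g1Num
  field_simp

lemma sq_mul_pow_ten_sub_sq_mul_g1Num_nonneg {t : ℝ} (ht : 0 ≤ t) :
    0 ≤ (2*(1 + t) + 6/5)^2 * (1 + t)^10 - t^2 * g1Num (1 + t) := by
  have expansion : (2*(1 + t) + 6/5)^2 * (1 + t)^10 - t^2 * g1Num (1 + t) =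
      (256 + 2880*t + 10720*t^2 + 21320*t^3 + 27835*t^4 + 30412*t^5 + 33900*t^6
        + 34320*t^7 + 25120*t^8 + 11560*t^9 + 2956*t^10 + 320*t^11) / 25 := by
    unfold g1Num
    ring
  rw [expansion]
  positivity

theorem stmt_2 (κ : ℝ) (hκ : 1 ≤ κ) :
    0 ≤ (2*κ + 6/5)^2 - (κ - 1)^2 * g1 κ := by
  have hpos : 0 < κ := by linarith
  obtain ⟨t, ht, rfl⟩ : ∃ t, 0 ≤ t ∧ κ = 1 + t := ⟨κ - 1, by linarith, by ring⟩
  rw [← mul_nonneg_iff_of_pos_right (pow_pos hpos 10), sub_mul, mul_assoc,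
    g1_mul_pow_ten hpos.ne', add_sub_cancel_left]
  exact sq_mul_pow_ten_sub_sq_mul_g1Num_nonneg ht
end
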